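/- Let M₀ = diag(μ₀, …, μ_{d−1}) and N₀ = diag(ν₀, …, ν_{d−1}) be diagonal d×d real matrices with all μ_i, ν_i ∈ [0,1] and M₀ ≠ N₀, and let Φ_M, Φ_N be the measurement channels of the two-outcome POVMs {M₀, 1_d − M₀} and {N₀, 1_d − N₀}, Δ = Φ_M − Φ_N. Then (Φ_M, Φ_N) is a Maximal Entanglement Worst Case pair, i.e. ‖Δ‖_⋄ = d·‖Δ‖_ME, if and only if there is exactly one index i ∈ {0, …, d−1} with μ_i ≠ ν_i. -/

import Mathlib

open Matrix Kronecker ComplexOrder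

noncomputable section

/-- The old `Matrix.PosSemidef.sqrt` (removed from Mathlib), spelled out. -/
noncomputable def posSemidefSqrt {n : Type*} [Fintype n] [DecidableEq n] {A : Matrix n n ℂ}
    (hA : A.PosSemidef) : Matrix n n ℂ :=
  hA.1.eigenvectorUnitary.1 * diagonal ((↑) ∘ (√·) ∘ hA.1.eigenvalues) *
    (star hA.1.eigenvectorUnitary : Matrix n n ℂ)

/-- The matrix absolute value `|A| = √(AᴴA)`. -/
noncomputable def matAbs {n : Type*} [Fintype n] [DecidableEq n] (A : Matrix n n ℂ) :
    Matrix n n ℂ :=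
  posSemidefSqrt (Matrix.posSemidef_conjTranspose_mul_self A)

/-- The trace norm `‖A‖₁ = Tr √(AᴴA)`. -/
noncomputable def traceNorm {n : Type*} [Fintype n] [DecidableEq n] (A : Matrix n n ℂ) : ℝ :=
  ((matAbs A).trace).re

/-- The positive semidefinite square root of a PSD matrix (zero otherwise). -/
noncomputable def matSqrt {n : Type*} [Fintype n] [DecidableEq n] (σ : Matrix n n ℂ) :
    Matrix n n ℂ :=
  open scoped Classical in
  if h : σ.PosSemidef then posSemidefSqrt h else 0

/-- A density matrix: positive semidefinite with unit trace. -/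
def IsDensity {n : Type*} [Fintype n] [DecidableEq n] (σ : Matrix n n ℂ) : Prop :=
  σ.PosSemidef ∧ σ.trace = 1

/-- The Choi operator of a linear map between matrix algebras. -/
noncomputable def choi {d m : ℕ}
    (S : Matrix (Fin d) (Fin d) ℂ →ₗ[ℂ] Matrix (Fin m) (Fin m) ℂ) :
    Matrix (Fin m × Fin d) (Fin m × Fin d) ℂ :=
  ∑ i : Fin d, ∑ j : Fin d,
    (S (Matrix.single i j 1)) ⊗ₖ (Matrix.single i j 1)

/-- The ME-norm `‖S‖_ME = ‖J(S)‖₁ / d`. -/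
noncomputable def MENorm {d m : ℕ}
    (S : Matrix (Fin d) (Fin d) ℂ →ₗ[ℂ] Matrix (Fin m) (Fin m) ℂ) : ℝ :=
  traceNorm (choi S) / d

/-- The diamond norm: supremum over density matrices σ of
`‖(1 ⊗ √σ) J(S) (1 ⊗ √σ)‖₁`. -/
noncomputable def diamondNorm {d m : ℕ}
    (S : Matrix (Fin d) (Fin d) ℂ →ₗ[ℂ] Matrix (Fin m) (Fin m) ℂ) : ℝ :=
  ⨆ σ : {σ : Matrix (Fin d) (Fin d) ℂ // IsDensity σ},
    traceNorm (((1 : Matrix (Fin m) (Fin m) ℂ) ⊗ₖ matSqrt σ.1) * choi S *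
      ((1 : Matrix (Fin m) (Fin m) ℂ) ⊗ₖ matSqrt σ.1))

/-- The M-operator `M(S) = Tr_B |J(S)|`. -/
noncomputable def Mop {d m : ℕ}
    (S : Matrix (Fin d) (Fin d) ℂ →ₗ[ℂ] Matrix (Fin m) (Fin m) ℂ) :
    Matrix (Fin d) (Fin d) ℂ :=
  Matrix.of fun k l => ∑ b : Fin m, matAbs (choi S) (b, k) (b, l)

/-- A quantum channel: completely positive (PSD Choi operator, by Choi's theorem)
and trace preserving. -/
def IsQChannel {d m : ℕ}
    (S : Matrix (Fin d) (Fin d) ℂ →ₗ[ℂ] Matrix (Fin m) (Fin m) ℂ) : Prop :=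
  (choi S).PosSemidef ∧ ∀ ρ : Matrix (Fin d) (Fin d) ℂ, (S ρ).trace = ρ.trace

/-- A POVM with `n` outcomes on `ℂ^d`. -/
def IsPOVM {d n : ℕ} (M : Fin n → Matrix (Fin d) (Fin d) ℂ) : Prop :=
  (∀ i, (M i).PosSemidef) ∧ ∑ i, M i = 1

/-- The measurement channel of a family of POVM elements:
`Φ_M(ρ) = ∑ i, Tr(ρ M_i) |i⟩⟨i|`. -/
noncomputable def measChannel {d n : ℕ} (M : Fin n → Matrix (Fin d) (Fin d) ℂ) :
    Matrix (Fin d) (Fin d) ℂ →ₗ[ℂ] Matrix (Fin n) (Fin n) ℂ where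
  toFun ρ := ∑ i, (ρ * M i).trace • Matrix.single i i (1 : ℂ)
  map_add' ρ σ := by
    simp [add_mul, Matrix.trace_add, add_smul, Finset.sum_add_distrib]
  map_smul' c ρ := by
    simp [Matrix.smul_mul, Matrix.trace_smul, smul_smul, Finset.smul_sum]

/-- The symmetric Werner-Holevo channel `Φ₊(ρ) = (Tr(ρ)·1 + ρᵀ)/(d+1)`. -/
noncomputable def whPlus (d : ℕ) :
    Matrix (Fin d) (Fin d) ℂ →ₗ[ℂ] Matrix (Fin d) (Fin d) ℂ where
  toFun ρ := ((d : ℂ) + 1)⁻¹ • (ρ.trace • (1 : Matrix (Fin d) (Fin d) ℂ) + ρ.transpose)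
  map_add' ρ σ := by
    simp [Matrix.trace_add, Matrix.transpose_add, add_smul, smul_add]
    module
  map_smul' c ρ := by
    simp [Matrix.trace_smul, Matrix.transpose_smul, smul_smul, smul_add]
    module

/-- The antisymmetric Werner-Holevo channel `Φ₋(ρ) = (Tr(ρ)·1 − ρᵀ)/(d−1)`. -/
noncomputable def whMinus (d : ℕ) :
    Matrix (Fin d) (Fin d) ℂ →ₗ[ℂ] Matrix (Fin d) (Fin d) ℂ where
  toFun ρ := ((d : ℂ) - 1)⁻¹ • (ρ.trace • (1 : Matrix (Fin d) (Fin d) ℂ) - ρ.transpose)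
  map_add' ρ σ := by
    simp [Matrix.trace_add, Matrix.transpose_add, add_smul]
    module
  map_smul' c ρ := by
    simp [Matrix.trace_smul, Matrix.transpose_smul, smul_smul]
    module

/-- The unitary (conjugation) channel `Φ_U(ρ) = U ρ Uᴴ`. -/
noncomputable def conjChannel {d : ℕ} (U : Matrix (Fin d) (Fin d) ℂ) :
    Matrix (Fin d) (Fin d) ℂ →ₗ[ℂ] Matrix (Fin d) (Fin d) ℂ where
  toFun ρ := U * ρ * Uᴴ
  map_add' ρ σ := by simp [Matrix.mul_add, Matrix.add_mul]
  map_smul' c ρ := by simp [Matrix.mul_smul, Matrix.smul_mul]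

/-! The Choi operator of `Δ` is `diag(1, -1) ⊗ diag(μ - ν)`, so `d ‖Δ‖_ME = 2 ∑ |μᵢ - νᵢ|`.
For a density matrix `σ`, splitting `diag(μ - ν)` into its positive and negative parts bounds
`‖√σ diag(μ - ν) √σ‖₁` by `∑ σᵢᵢ |μᵢ - νᵢ| ≤ maxᵢ |μᵢ - νᵢ|`, with equality at the pure state
`|i₀⟩⟨i₀|` of a maximising index; hence `‖Δ‖_⋄ = 2 maxᵢ |μᵢ - νᵢ|`. The maximum of the
`|μᵢ - νᵢ|` equals their sum exactly when only one of them is nonzero. -/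

open scoped MatrixOrder

section TraceNorm

variable {n : Type*} [Fintype n] [DecidableEq n]

lemma posSemidefSqrt_eq_sqrt {A : Matrix n n ℂ} (hA : A.PosSemidef) :
    posSemidefSqrt hA = CFC.sqrt A := by
  rw [CFC.sqrt_eq_cfc, cfc_nnreal_eq_real _ A, hA.1.cfc_eq]
  simp only [IsHermitian.cfc, Unitary.conjStarAlgAut_apply, posSemidefSqrt]
  congr 3
  funext i
  simp [Real.coe_toNNReal', max_eq_left (hA.eigenvalues_nonneg i)]

lemma matAbs_eq_abs (A : Matrix n n ℂ) : matAbs A = CFC.abs A :=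
  posSemidefSqrt_eq_sqrt _

lemma matSqrt_eq_sqrt {σ : Matrix n n ℂ} (hσ : σ.PosSemidef) : matSqrt σ = CFC.sqrt σ := by
  rw [matSqrt, dif_pos hσ, posSemidefSqrt_eq_sqrt]

lemma matAbs_eq_of_mul_self {A B : Matrix n n ℂ} (hB : B.PosSemidef) (h : B * B = Aᴴ * A) :
    matAbs A = B := by
  rw [matAbs_eq_abs]
  exact CFC.sqrt_unique h hB.nonneg

lemma isDensity_diagonal_single (i₀ : n) :
    IsDensity (diagonal (Pi.single i₀ 1) : Matrix n n ℂ) := by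
  refine ⟨posSemidef_diagonal_iff.mpr fun i => ?_, by simp [trace_diagonal]⟩
  rcases eq_or_ne i i₀ with rfl | h <;> simp [*]

lemma matSqrt_diagonal_single (i₀ : n) :
    matSqrt (diagonal (Pi.single i₀ 1) : Matrix n n ℂ) = diagonal (Pi.single i₀ 1) := by
  have hpsd := (isDensity_diagonal_single (n := n) i₀).1
  rw [matSqrt_eq_sqrt hpsd]
  refine CFC.sqrt_unique ?_ hpsd.nonneg
  rw [diagonal_mul_diagonal]
  congr 1
  funext i
  rcases eq_or_ne i i₀ with rfl | h <;> simp [*]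

lemma traceNorm_diagonal (a : n → ℝ) :
    traceNorm (diagonal fun i => (a i : ℂ)) = ∑ i, |a i| := by
  have habs : matAbs (diagonal fun i => (a i : ℂ)) = diagonal fun i => ((|a i| : ℝ) : ℂ) := by
    refine matAbs_eq_of_mul_self (posSemidef_diagonal_iff.mpr fun i => ?_) ?_
    · exact Complex.zero_le_real.mpr (abs_nonneg _)
    · simp [diagonal_conjTranspose, ← Complex.ofReal_mul, abs_mul_abs_self]
  simp [traceNorm, habs, trace_diagonal, Complex.re_sum]

lemma traceNorm_kronecker_of_conjTranspose_mul_self {m : Type*} [Fintype m] [DecidableEq m]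
    {P : Matrix m m ℂ} (hP : Pᴴ * P = 1) (B : Matrix n n ℂ) :
    traceNorm (P ⊗ₖ B) = Fintype.card m * traceNorm B := by
  have habs : matAbs (P ⊗ₖ B) = 1 ⊗ₖ matAbs B := by
    refine matAbs_eq_of_mul_self (PosSemidef.one.kronecker ?_) ?_
    · rw [matAbs_eq_abs]
      exact (CFC.abs_nonneg B).posSemidef
    · rw [← mul_kronecker_mul, conjTranspose_kronecker, ← mul_kronecker_mul, hP, one_mul,
        matAbs_eq_abs, CFC.abs_mul_abs]
      rfl
  simp [traceNorm, habs, trace_kronecker]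

namespace Matrix.IsHermitian

variable {H : Matrix n n ℂ} (hH : H.IsHermitian)
include hH

lemma traceNorm_eq : traceNorm H = ∑ i, |hH.eigenvalues i| := by
  rw [traceNorm, matAbs_eq_abs, CFC.abs_eq_cfc_norm H hH.isSelfAdjoint, hH.cfc_eq,
    IsHermitian.cfc, Unitary.conjStarAlgAut_apply, trace_mul_cycle, Unitary.coe_star_mul_self]
  simp [trace_diagonal, Complex.re_sum]

lemma sum_star_dotProduct_mulVec_eigenvectorBasis (C : Matrix n n ℂ) :
    ∑ i, star ⇑(hH.eigenvectorBasis i) ⬝ᵥ C *ᵥ ⇑(hH.eigenvectorBasis i) = C.trace := by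
  set U : Matrix n n ℂ := (hH.eigenvectorUnitary : Matrix n n ℂ)
  have hconj : (star U * C * U).trace = C.trace := by
    rw [trace_mul_cycle, Unitary.mul_star_self_of_mem hH.eigenvectorUnitary.2, one_mul]
  rw [← hconj, trace]
  refine Finset.sum_congr rfl fun i _ => ?_
  simp [U, Matrix.mul_apply, dotProduct, mulVec, Finset.mul_sum, Finset.sum_mul]
  rw [Finset.sum_comm]
  simp only [mul_assoc]

end Matrix.IsHermitian

lemma traceNorm_sub_le {A B : Matrix n n ℂ} (hA : A.PosSemidef) (hB : B.PosSemidef) :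
    traceNorm (A - B) ≤ A.trace.re + B.trace.re := by
  have hH : (A - B).IsHermitian := hA.1.sub hB.1
  set v := hH.eigenvectorBasis
  have heig : ∀ i, hH.eigenvalues i
      = (star ⇑(v i) ⬝ᵥ A *ᵥ ⇑(v i)).re - (star ⇑(v i) ⬝ᵥ B *ᵥ ⇑(v i)).re := by
    intro i
    rw [hH.eigenvalues_eq, sub_mulVec, dotProduct_sub]
    rfl
  rw [hH.traceNorm_eq, ← hH.sum_star_dotProduct_mulVec_eigenvectorBasis A,
    ← hH.sum_star_dotProduct_mulVec_eigenvectorBasis B, Complex.re_sum, Complex.re_sum,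
    ← Finset.sum_add_distrib]
  refine Finset.sum_le_sum fun i _ => ?_
  have hAi : 0 ≤ (star ⇑(v i) ⬝ᵥ A *ᵥ ⇑(v i)).re := hA.re_dotProduct_nonneg _
  have hBi : 0 ≤ (star ⇑(v i) ⬝ᵥ B *ᵥ ⇑(v i)).re := hB.re_dotProduct_nonneg _
  rw [heig]
  exact abs_sub_le_iff.mpr ⟨by linarith, by linarith⟩

end TraceNorm

section Channel

variable {d m : ℕ}

lemma choi_eq_kronecker_transpose {S : Matrix (Fin d) (Fin d) ℂ →ₗ[ℂ] Matrix (Fin m) (Fin m) ℂ}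
    {D : Matrix (Fin d) (Fin d) ℂ} {P : Matrix (Fin m) (Fin m) ℂ}
    (hS : ∀ ρ, S ρ = (ρ * D).trace • P) : choi S = P ⊗ₖ Dᵀ := by
  ext ⟨a, i⟩ ⟨b, j⟩
  simp [choi, hS, Matrix.sum_apply, trace, single_apply, mul_apply, ite_and, mul_comm]

lemma measChannel_sub_measChannel_apply (M N ρ : Matrix (Fin d) (Fin d) ℂ) :
    (measChannel ![M, 1 - M] - measChannel ![N, 1 - N]) ρ
      = (ρ * (M - N)).trace • diagonal ![1, -1] := by
  have hdiag : (diagonal ![1, -1] : Matrix (Fin 2) (Fin 2) ℂ) = single 0 0 1 - single 1 1 1 := by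
    ext a b
    fin_cases a <;> fin_cases b <;> simp
  simp only [LinearMap.sub_apply, measChannel, LinearMap.coe_mk, AddHom.coe_mk, Fin.sum_univ_two,
    cons_val_zero, cons_val_one, mul_sub, mul_one, trace_sub, hdiag]
  module

end Channel

section DiagonalCompression

variable {n : Type*} [Fintype n] [DecidableEq n] {S : Matrix n n ℂ}

lemma re_trace_mul_diagonal_mul (r : n → ℝ) :
    (S * diagonal (fun i => (r i : ℂ)) * S).trace.re = ∑ i, ((S * S).diag i).re * r i := by
  rw [trace_mul_cycle, trace, Complex.re_sum]
  simp [mul_diagonal]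

lemma Matrix.IsHermitian.posSemidef_mul_diagonal_mul (hS : S.IsHermitian) {r : n → ℝ}
    (hr : ∀ i, 0 ≤ r i) : (S * diagonal (fun i => (r i : ℂ)) * S).PosSemidef := by
  have hD : (diagonal fun i => (r i : ℂ)).PosSemidef :=
    posSemidef_diagonal_iff.mpr fun i => Complex.zero_le_real.mpr (hr i)
  simpa [hS.eq] using hD.mul_mul_conjTranspose_same S

lemma traceNorm_mul_diagonal_mul_le (hS : S.IsHermitian) {c : n → ℝ} {i₀ : n}
    (hmax : ∀ i, |c i| ≤ |c i₀|) :
    traceNorm (S * diagonal (fun i => (c i : ℂ)) * S) ≤ |c i₀| * (S * S).trace.re := by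
  have hsplit : S * diagonal (fun i => (c i : ℂ)) * S
      = S * diagonal (fun i => (((c i)⁺ : ℝ) : ℂ)) * S
        - S * diagonal (fun i => (((c i)⁻ : ℝ) : ℂ)) * S := by
    rw [← Matrix.sub_mul, ← Matrix.mul_sub, diagonal_sub]
    simp_rw [← Complex.ofReal_sub, posPart_sub_negPart]
  have hdiag_nonneg : ∀ i, 0 ≤ ((S * S).diag i).re := fun i => by
    have := (posSemidef_conjTranspose_mul_self S).diag_nonneg (i := i)
    rw [hS.eq] at this
    exact (Complex.nonneg_iff.mp this).1
  calc traceNorm (S * diagonal (fun i => (c i : ℂ)) * S)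
      ≤ ∑ i, ((S * S).diag i).re * (c i)⁺ + ∑ i, ((S * S).diag i).re * (c i)⁻ := by
        rw [hsplit, ← re_trace_mul_diagonal_mul, ← re_trace_mul_diagonal_mul]
        exact traceNorm_sub_le (hS.posSemidef_mul_diagonal_mul fun i => posPart_nonneg _)
          (hS.posSemidef_mul_diagonal_mul fun i => negPart_nonneg _)
    _ = ∑ i, ((S * S).diag i).re * |c i| := by
        rw [← Finset.sum_add_distrib]
        simp_rw [← mul_add, posPart_add_negPart]
    _ ≤ ∑ i, ((S * S).diag i).re * |c i₀| :=
        Finset.sum_le_sum fun i _ => mul_le_mul_of_nonneg_left (hmax i) (hdiag_nonneg i)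
    _ = |c i₀| * (S * S).trace.re := by
        rw [← Finset.sum_mul, mul_comm, trace, Complex.re_sum]

end DiagonalCompression

section ChoiKroneckerDiagonal

variable {d m : ℕ} {S : Matrix (Fin d) (Fin d) ℂ →ₗ[ℂ] Matrix (Fin m) (Fin m) ℂ}
  {P : Matrix (Fin m) (Fin m) ℂ} {c : Fin d → ℝ}

lemma natCast_mul_MENorm (hS : choi S = P ⊗ₖ diagonal (fun i => (c i : ℂ))) (hP : Pᴴ * P = 1)
    (hd : d ≠ 0) : d * MENorm S = m * ∑ i, |c i| := by
  rw [MENorm, hS, traceNorm_kronecker_of_conjTranspose_mul_self hP, traceNorm_diagonal,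
    Fintype.card_fin, mul_div_cancel₀ _ (Nat.cast_ne_zero.mpr hd)]

lemma diamondNorm_eq (hS : choi S = P ⊗ₖ diagonal (fun i => (c i : ℂ))) (hP : Pᴴ * P = 1)
    {i₀ : Fin d} (hmax : ∀ i, |c i| ≤ |c i₀|) : diamondNorm S = m * |c i₀| := by
  have hval : ∀ σ : Matrix (Fin d) (Fin d) ℂ,
      traceNorm ((1 : Matrix (Fin m) (Fin m) ℂ) ⊗ₖ matSqrt σ * choi S * (1 ⊗ₖ matSqrt σ))
        = m * traceNorm (matSqrt σ * diagonal (fun i => (c i : ℂ)) * matSqrt σ) := by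
    intro σ
    rw [hS, ← mul_kronecker_mul, ← mul_kronecker_mul, one_mul, mul_one,
      traceNorm_kronecker_of_conjTranspose_mul_self hP, Fintype.card_fin]
  have hle : ∀ σ : {σ : Matrix (Fin d) (Fin d) ℂ // IsDensity σ},
      traceNorm ((1 : Matrix (Fin m) (Fin m) ℂ) ⊗ₖ matSqrt σ.1 * choi S * (1 ⊗ₖ matSqrt σ.1))
        ≤ m * |c i₀| := by
    rintro ⟨σ, hσ, htr⟩
    have hsqrt : (matSqrt σ).PosSemidef := by
      rw [matSqrt_eq_sqrt hσ]
      exact (CFC.sqrt_nonneg σ).posSemidef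
    have hsq : matSqrt σ * matSqrt σ = σ := by
      rw [matSqrt_eq_sqrt hσ]
      exact CFC.sqrt_mul_sqrt_self σ hσ.nonneg
    rw [hval]
    refine mul_le_mul_of_nonneg_left ?_ (Nat.cast_nonneg m)
    simpa [hsq, htr] using traceNorm_mul_diagonal_mul_le hsqrt.1 hmax
  set σ₀ : Matrix (Fin d) (Fin d) ℂ := diagonal (Pi.single i₀ 1)
  have hσ₀ : IsDensity σ₀ := isDensity_diagonal_single i₀
  have hattain : traceNorm (σ₀ * diagonal (fun i => (c i : ℂ)) * σ₀) = |c i₀| := by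
    have : σ₀ * diagonal (fun i => (c i : ℂ)) * σ₀
        = diagonal fun i => ((Pi.single i₀ (c i₀) : Fin d → ℝ) i : ℂ) := by
      simp only [σ₀, diagonal_mul_diagonal]
      congr 1
      funext i
      rcases eq_or_ne i i₀ with rfl | h <;> simp [*]
    rw [this, traceNorm_diagonal, Finset.sum_eq_single i₀] <;> simp +contextual
  have : Nonempty {σ : Matrix (Fin d) (Fin d) ℂ // IsDensity σ} := ⟨⟨σ₀, hσ₀⟩⟩
  refine le_antisymm (ciSup_le hle) ?_
  refine le_ciSup_of_le ⟨_, Set.forall_mem_range.mpr hle⟩ ⟨σ₀, hσ₀⟩ ?_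
  rw [hval, matSqrt_diagonal_single, hattain]

end ChoiKroneckerDiagonal

lemma abs_eq_sum_abs_iff_existsUnique_ne_zero {ι : Type*} [Fintype ι] {c : ι → ℝ} {i₀ : ι}
    (hmax : ∀ i, |c i| ≤ |c i₀|) (hc : c ≠ 0) : |c i₀| = ∑ i, |c i| ↔ ∃! i, c i ≠ 0 := by
  classical
  have hi₀ : c i₀ ≠ 0 := by
    obtain ⟨j, hj⟩ := Function.ne_iff.mp hc
    exact abs_pos.mp ((abs_pos.mpr hj).trans_le (hmax j))
  rw [← Finset.add_sum_erase _ _ (Finset.mem_univ i₀), left_eq_add,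
    Finset.sum_eq_zero_iff_of_nonneg fun i _ => abs_nonneg _]
  simp only [Finset.mem_erase, Finset.mem_univ, and_true, abs_eq_zero]
  refine ⟨fun h => ⟨i₀, hi₀, fun j hj => not_imp_comm.mp (h j) hj⟩,
    fun ⟨i, _, huniq⟩ j hj => ?_⟩
  by_contra hcj
  exact hj ((huniq j hcj).trans (huniq i₀ hi₀).symm)

theorem stmt12_general {d : ℕ} (μ ν : Fin d → ℝ)
    (hne : μ ≠ ν)
    (M₀ N₀ : Matrix (Fin d) (Fin d) ℂ)
    (hM₀ : M₀ = Matrix.diagonal fun i => (μ i : ℂ))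
    (hN₀ : N₀ = Matrix.diagonal fun i => (ν i : ℂ)) :
    diamondNorm (measChannel ![M₀, 1 - M₀] - measChannel ![N₀, 1 - N₀])
      = d * MENorm (measChannel ![M₀, 1 - M₀] - measChannel ![N₀, 1 - N₀])
    ↔ ∃! i : Fin d, μ i ≠ ν i := by
  set c := μ - ν
  have hc : c ≠ 0 := sub_ne_zero.mpr hne
  obtain ⟨j, -⟩ := Function.ne_iff.mp hc
  have : Nonempty (Fin d) := ⟨j⟩
  obtain ⟨i₀, hmax⟩ := Finite.exists_max (|c ·|)
  have hP : (diagonal ![1, -1] : Matrix (Fin 2) (Fin 2) ℂ)ᴴ * diagonal ![1, -1] = 1 := by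
    ext a b
    fin_cases a <;> fin_cases b <;> simp
  have hchoi : choi (measChannel ![M₀, 1 - M₀] - measChannel ![N₀, 1 - N₀])
      = diagonal ![1, -1] ⊗ₖ diagonal (fun i => (c i : ℂ)) := by
    rw [choi_eq_kronecker_transpose (measChannel_sub_measChannel_apply M₀ N₀), hM₀, hN₀,
      diagonal_sub, diagonal_transpose]
    simp [c]
  rw [diamondNorm_eq (m := 2) hchoi hP hmax,
    natCast_mul_MENorm (m := 2) hchoi hP (Fin.pos i₀).ne', Nat.cast_ofNat,
    mul_right_inj' two_ne_zero, abs_eq_sum_abs_iff_existsUnique_ne_zero hmax hc]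
  simp [c, sub_eq_zero]

/-- for diagonal two-outcome POVMs `{M₀, 1−M₀}`, `{N₀, 1−N₀}`
with `M₀ = diag(μ)`, `N₀ = diag(ν)`, entries in `[0,1]` and `μ ≠ ν`, the
measurement channels form a MEWC pair iff exactly one index has `μ_i ≠ ν_i`. -/
theorem stmt12 {d : ℕ} (hd : 1 ≤ d) (μ ν : Fin d → ℝ)
    (hμ : ∀ i, μ i ∈ Set.Icc (0 : ℝ) 1) (hν : ∀ i, ν i ∈ Set.Icc (0 : ℝ) 1)
    (hne : μ ≠ ν)
    (M₀ N₀ : Matrix (Fin d) (Fin d) ℂ)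
    (hM₀ : M₀ = Matrix.diagonal fun i => (μ i : ℂ))
    (hN₀ : N₀ = Matrix.diagonal fun i => (ν i : ℂ)) :
    diamondNorm (measChannel ![M₀, 1 - M₀] - measChannel ![N₀, 1 - N₀])
      = d * MENorm (measChannel ![M₀, 1 - M₀] - measChannel ![N₀, 1 - N₀])
    ↔ ∃! i : Fin d, μ i ≠ ν i :=
  stmt12_general μ ν hne M₀ N₀ hM₀ hN₀

end
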